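/- arXiv:2201.02283 — 3 statements merged into one kernel-verified Lean document; each statement's English description precedes it below -/
import Mathlib

section
/- Fix b ≥ 1, k ≥ 1, B ≥ 1 and P_b ∈ [0,1]. For j = 1,…,k let (X_j, Y_j) be i.i.d. pairs of random elements of {1,…,2^b} with P[X_j = Y_j] = P_b for each j. Let x, y ∈ {0,1}^{2^b·k} be the concatenations of the one-hot encodings of X_1,…,X_k and of Y_1,…,Y_k respectively, and let z, w be their count-sketches with B bins using shared randomness (h, r) independent of all (X_j, Y_j), where the r_i are i.i.d. symmetric Rademacher. Then E[⟨z,w⟩] = k·P_b and Var(⟨z,w⟩) = (1/B)·[k² + k²P_b² − kP_b² − kP_b] + kP_b(1−P_b). -/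
/-!
Conditioning on the pairs `(X_j, Y_j)` reduces the theorem to count-sketches of fixed vectors
`x, y`. For fixed buckets `h`, the sketch inner product is the Rademacher chaos
`∑ a b, M a b * r a * r b` with `M a b = x a * y b * 1{h a = h b}`. Its mean is `∑ a, M a a`.
Its second moment is `(∑ a, M a a)² + ∑ M a b² + ∑ M a b * M b a - 2 ∑ M a a²`, because
`E[r a r b r c r d]` is `1` when the four indices pair up and `0` otherwise. Averaging over the
buckets, where `P[h a = h b] = 1/B` for `a ≠ b`, gives `E⟨z,w⟩ = ⟨x,y⟩` and
`E⟨z,w⟩² = ⟨x,y⟩² + (‖x‖²‖y‖² + ⟨x,y⟩² - 2 ∑ x_i² y_i²) / B`. For the concatenated one-hot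
encodings, `‖x‖² = ‖y‖² = k` and `⟨x,y⟩ = ∑ x_i² y_i² = N`, the number of colliding pairs.
`N` is binomial with parameters `k` and `P_b`, so its first two moments give the result.
-/

open MeasureTheory ProbabilityTheory
open scoped ENNReal

/-- Count-sketch (with `B` bins, buckets `h`, signs `r`) of the concatenation of the
one-hot encodings of the `k` hash values `X_1, …, X_k ∈ Fin n`; the data vector is indexed
by `Fin k × Fin n` and its `(j', v)` entry is `1{X_{j'} = v}`:
`z_j = Σ_{(j',v)} 1{X_{j'} = v} · r_{(j',v)} · 1{h(j',v) = j}`. -/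
noncomputable def oneHotSketch {Ω : Type*} {k n B : ℕ} (X : Fin k → Ω → Fin n)
    (h : Fin k × Fin n → Ω → Fin B) (r : Fin k × Fin n → Ω → ℝ) (j : Fin B) (ω : Ω) : ℝ :=
  ∑ i : Fin k × Fin n, (if X i.1 ω = i.2 then 1 else 0) * r i ω * (if h i ω = j then 1 else 0)

namespace ProbabilityTheory

variable {Ω α β : Type*} [MeasurableSpace Ω] [MeasurableSpace α] [MeasurableSpace β]
  {μ : Measure Ω} [IsFiniteMeasure μ] {f : Ω → α} {g : Ω → β}

theorem IndepFun.integral_comp_eq_integral_integral (hfg : IndepFun f g μ)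
    (hf : AEMeasurable f μ) (hg : AEMeasurable g μ) {F : α × β → ℝ}
    (hF : StronglyMeasurable F) (hint : Integrable (fun ω => F (f ω, g ω)) μ) :
    ∫ ω, F (f ω, g ω) ∂μ = ∫ ω, ∫ ω', F (f ω, g ω') ∂μ ∂μ := by
  have hmap := hfg.map_prod_eq_prod_map_map hf hg
  have hint' : Integrable F ((μ.map f).prod (μ.map g)) := by
    rw [← hmap]
    exact (integrable_map_measure hF.aestronglyMeasurable (hf.prodMk hg)).2 hint
  rw [← integral_map (hf.prodMk hg) hF.aestronglyMeasurable, hmap, integral_prod F hint',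
    integral_map hf hF.integral_prod_right'.aestronglyMeasurable]
  refine integral_congr_ae (Filter.Eventually.of_forall fun a => ?_)
  exact integral_map hg (hF.comp_measurable measurable_prodMk_left).aestronglyMeasurable

end ProbabilityTheory

section Signs

variable {Ω ι : Type*} [MeasurableSpace Ω] {P : Measure Ω} {r : ι → Ω → ℝ}

lemma memLp_top_of_sq_eq_one {f : Ω → ℝ} (hf : AEStronglyMeasurable f P)
    (hsq : ∀ᵐ ω ∂P, f ω ^ 2 = 1) : MemLp f ∞ P :=
  memLp_top_of_bound hf 1 (hsq.mono fun _ hω => (sq_le_one_iff_abs_le_one _).1 hω.le)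

variable [DecidableEq ι]

lemma integral_sign_mul_sign (hr : iIndepFun r P) (hrm : ∀ i, Measurable (r i))
    (hsq : ∀ i, ∀ᵐ ω ∂P, r i ω ^ 2 = 1) (hmean : ∀ i, ∫ ω, r i ω ∂P = 0) (a b : ι) :
    ∫ ω, r a ω * r b ω ∂P = if a = b then 1 else 0 := by
  have := hr.isProbabilityMeasure
  split_ifs with hab
  · subst hab
    rw [integral_congr_ae ((hsq a).mono fun ω hω =>
      show r a ω * r a ω = (fun _ => (1 : ℝ)) ω by rw [← sq, hω])]
    simp
  · rw [(hr.indepFun hab).integral_fun_mul_eq_mul_integral (hrm a).aestronglyMeasurable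
      (hrm b).aestronglyMeasurable, hmean a, zero_mul]

lemma integral_sign_mul_eq_zero (hr : iIndepFun r P) (hrm : ∀ i, Measurable (r i))
    (hmean : ∀ i, ∫ ω, r i ω ∂P = 0) {a b c d : ι} (hb : a ≠ b) (hc : a ≠ c) (hd : a ≠ d) :
    ∫ ω, r a ω * (r b ω * r c ω * r d ω) ∂P = 0 := by
  have hindep : IndepFun (r a) (fun ω => r b ω * r c ω * r d ω) P :=
    (hr.indepFun_finset {a} {b, c, d} (by simp [hb, hc, hd]) hrm).comp
      (φ := fun u : ({a} : Finset ι) → ℝ => u ⟨a, Finset.mem_singleton_self a⟩)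
      (ψ := fun u : ({b, c, d} : Finset ι) → ℝ => u ⟨b, by simp⟩ * u ⟨c, by simp⟩ * u ⟨d, by simp⟩)
      (by fun_prop) (by fun_prop)
  rw [hindep.integral_fun_mul_eq_mul_integral (hrm a).aestronglyMeasurable
    (((hrm b).mul (hrm c)).mul (hrm d)).aestronglyMeasurable, hmean a, zero_mul]

lemma integral_sign_mul_four (hr : iIndepFun r P) (hrm : ∀ i, Measurable (r i))
    (hsq : ∀ i, ∀ᵐ ω ∂P, r i ω ^ 2 = 1) (hmean : ∀ i, ∫ ω, r i ω ∂P = 0) (a b c d : ι) :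
    ∫ ω, r a ω * r b ω * (r c ω * r d ω) ∂P =
      (if a = b ∧ c = d then 1 else 0) + (if a = c ∧ b = d then 1 else 0) +
        (if a = d ∧ b = c then 1 else 0) - 2 * if a = b ∧ a = c ∧ a = d then 1 else 0 := by
  have hpair := integral_sign_mul_sign hr hrm hsq hmean
  -- If `a` has a partner among `b, c, d`, then `r a ^ 2 = 1` cancels and a second moment is left.
  have hcancel (f : Ω → ℝ) : ∫ ω, r a ω ^ 2 * f ω ∂P = ∫ ω, f ω ∂P :=
    integral_congr_ae ((hsq a).mono fun ω hω => by simp [hω])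
  by_cases hab : a = b
  · subst hab
    simp only [show ∀ ω, r a ω * r a ω * (r c ω * r d ω) = r a ω ^ 2 * (r c ω * r d ω) from
      fun ω => by ring, hcancel, hpair]
    by_cases hac : a = c <;> by_cases had : a = d <;> by_cases hcd : c = d <;> grind
  by_cases hac : a = c
  · subst hac
    simp only [show ∀ ω, r a ω * r b ω * (r a ω * r d ω) = r a ω ^ 2 * (r b ω * r d ω) from
      fun ω => by ring, hcancel, hpair]
    by_cases had : a = d <;> by_cases hbd : b = d <;> grind
  by_cases had : a = d
  · subst had
    simp only [show ∀ ω, r a ω * r b ω * (r c ω * r a ω) = r a ω ^ 2 * (r b ω * r c ω) from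
      fun ω => by ring, hcancel, hpair]
    by_cases hbc : b = c <;> grind
  simp only [show ∀ ω, r a ω * r b ω * (r c ω * r d ω) = r a ω * (r b ω * r c ω * r d ω) from
    fun ω => by ring, integral_sign_mul_eq_zero hr hrm hmean hab hac had]
  simp [hab, hac, had]

variable [Fintype ι]

lemma integral_sum_mul_sign_mul_sign (hr : iIndepFun r P) (hrm : ∀ i, Measurable (r i))
    (hsq : ∀ i, ∀ᵐ ω ∂P, r i ω ^ 2 = 1) (hmean : ∀ i, ∫ ω, r i ω ∂P = 0) (M : ι → ι → ℝ) :
    ∫ ω, ∑ a, ∑ b, M a b * (r a ω * r b ω) ∂P = ∑ a, M a a := by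
  have := hr.isProbabilityMeasure
  have hsign i := memLp_top_of_sq_eq_one (hrm i).aestronglyMeasurable (hsq i)
  have hint (a b : ι) : Integrable (fun ω => M a b * (r a ω * r b ω)) P :=
    (((hsign b).mul (hsign a)).integrable le_top).const_mul _
  rw [integral_finsetSum _ fun a _ => integrable_finsetSum _ fun b _ => hint a b]
  simp_rw [integral_finsetSum _ fun b _ => hint _ b, integral_const_mul,
    integral_sign_mul_sign hr hrm hsq hmean, mul_ite, mul_one, mul_zero, Finset.sum_ite_eq,
    Finset.mem_univ, if_true]

lemma integral_sq_sum_mul_sign_mul_sign (hr : iIndepFun r P) (hrm : ∀ i, Measurable (r i))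
    (hsq : ∀ i, ∀ᵐ ω ∂P, r i ω ^ 2 = 1) (hmean : ∀ i, ∫ ω, r i ω ∂P = 0) (M : ι → ι → ℝ) :
    ∫ ω, (∑ a, ∑ b, M a b * (r a ω * r b ω)) ^ 2 ∂P =
      (∑ a, M a a) ^ 2 + ∑ a, ∑ b, M a b ^ 2 + ∑ a, ∑ b, M a b * M b a -
        2 * ∑ a, M a a ^ 2 := by
  have := hr.isProbabilityMeasure
  have hsign i := memLp_top_of_sq_eq_one (hrm i).aestronglyMeasurable (hsq i)
  have hint (p : (ι × ι) × (ι × ι)) : Integrable (fun ω => M p.1.1 p.1.2 * M p.2.1 p.2.2 *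
      (r p.1.1 ω * r p.1.2 ω * (r p.2.1 ω * r p.2.2 ω))) P := by
    have hpair (a b : ι) : MemLp (fun ω => r a ω * r b ω) ∞ P := (hsign b).mul (hsign a)
    exact (((hpair _ _).mul (hpair _ _)).integrable le_top).const_mul _
  have hexpand (ω : Ω) : (∑ a, ∑ b, M a b * (r a ω * r b ω)) ^ 2 =
      ∑ p : (ι × ι) × (ι × ι), M p.1.1 p.1.2 * M p.2.1 p.2.2 *
        (r p.1.1 ω * r p.1.2 ω * (r p.2.1 ω * r p.2.2 ω)) := by
    simp only [sq, Fintype.sum_prod_type, Finset.sum_mul, Finset.mul_sum]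
    refine Finset.sum_congr rfl fun a _ => Finset.sum_congr rfl fun b _ =>
      Finset.sum_congr rfl fun c _ => Finset.sum_congr rfl fun d _ => by ring
  simp only [hexpand]
  rw [integral_finsetSum _ fun p _ => hint p]
  simp only [Fintype.sum_prod_type, integral_const_mul, integral_sign_mul_four hr hrm hsq hmean,
    mul_sub, mul_add, Finset.sum_sub_distrib, Finset.sum_add_distrib, ite_and, mul_ite, mul_one,
    mul_zero, Finset.sum_ite_irrel, Finset.sum_const_zero, Finset.sum_ite_eq, Finset.mem_univ,
    if_true]
  rw [sq, Finset.sum_mul_sum, Finset.mul_sum]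
  simp only [sq, mul_comm (2 : ℝ)]

end Signs

lemma sum_ite_eq_mul_ite_eq {α : Type*} [Fintype α] [DecidableEq α] (u v : α) :
    ∑ j, (if u = j then 1 else 0 : ℝ) * (if v = j then 1 else 0) = if u = v then 1 else 0 := by
  simp only [ite_mul, one_mul, zero_mul, Finset.sum_ite_eq, Finset.mem_univ, if_true]
  exact if_congr eq_comm rfl rfl

section Hash

variable {Ω ι : Type*} [MeasurableSpace Ω] {P : Measure Ω} {B : ℕ} {h : ι → Ω → Fin B}

lemma integral_ite_eq_measureReal {α : Type*} [MeasurableSpace α] [MeasurableSingletonClass α]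
    [DecidableEq α]
    {f : Ω → α} (hf : Measurable f) (a : α) :
    ∫ ω, (if f ω = a then 1 else 0 : ℝ) ∂P = P.real {ω | f ω = a} := by
  rw [← integral_indicator_one (s := {ω | f ω = a}) (hf (measurableSet_singleton a))]
  congr 1; ext ω
  by_cases hω : f ω = a <;> simp [hω]

lemma integral_ite_hash_eq_hash [DecidableEq ι] (hh : iIndepFun h P)
    (hhm : ∀ i, Measurable (h i)) (hunif : ∀ i j, P {ω | h i ω = j} = (B : ℝ≥0∞)⁻¹) (a b : ι) :
    ∫ ω, (if h a ω = h b ω then 1 else 0 : ℝ) ∂P = if a = b then 1 else (B : ℝ)⁻¹ := by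
  have := hh.isProbabilityMeasure
  split_ifs with hab
  · simp [hab]
  have hbucket (i : ι) (j : Fin B) : ∫ ω, (if h i ω = j then 1 else 0 : ℝ) ∂P = (B : ℝ)⁻¹ := by
    rw [integral_ite_eq_measureReal (hhm i), measureReal_def, hunif, ENNReal.toReal_inv,
      ENNReal.toReal_natCast]
  have hmeas (i : ι) (j : Fin B) : Measurable fun ω => if h i ω = j then (1 : ℝ) else 0 :=
    (measurable_of_countable (fun x : Fin B => if x = j then (1 : ℝ) else 0)).comp (hhm i)
  calc ∫ ω, (if h a ω = h b ω then 1 else 0 : ℝ) ∂P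
      = ∫ ω, ∑ j, (if h a ω = j then 1 else 0 : ℝ) * (if h b ω = j then 1 else 0) ∂P := by
        simp only [sum_ite_eq_mul_ite_eq]
    _ = ∑ j : Fin B, (B : ℝ)⁻¹ * (B : ℝ)⁻¹ := by
        rw [integral_finsetSum _ fun j _ => Integrable.of_bound
          (f := fun ω => (if h a ω = j then (1 : ℝ) else 0) * if h b ω = j then 1 else 0)
          ((hmeas a j).mul (hmeas b j)).aestronglyMeasurable 1
          (ae_of_all _ fun ω => by split_ifs <;> norm_num)]
        refine Finset.sum_congr rfl fun j _ => ?_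
        rw [(hh.indepFun hab).integral_fun_comp_mul_comp (hhm a).aemeasurable (hhm b).aemeasurable
          (f := fun x => if x = j then (1 : ℝ) else 0) (g := fun x => if x = j then (1 : ℝ) else 0)
          (measurable_of_countable _).aestronglyMeasurable
          (measurable_of_countable _).aestronglyMeasurable, hbucket, hbucket]
    _ = (B : ℝ)⁻¹ := by
        rcases eq_or_ne B 0 with hB | hB
        · simp [hB]
        · rw [Finset.sum_const, Finset.card_univ, Fintype.card_fin, nsmul_eq_mul, ← mul_assoc,
            mul_inv_cancel₀ (Nat.cast_ne_zero.2 hB), one_mul]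

end Hash

section CountSketch

variable {ι : Type*} [Fintype ι] {B : ℕ}

def countSketch (x : ι → ℝ) (h : ι → Fin B) (s : ι → ℝ) (j : Fin B) : ℝ :=
  ∑ i, x i * s i * if h i = j then 1 else 0

def countSketchInner (x y : ι → ℝ) (h : ι → Fin B) (s : ι → ℝ) : ℝ :=
  ∑ j, countSketch x h s j * countSketch y h s j

lemma countSketchInner_eq_sum (x y : ι → ℝ) (h : ι → Fin B) (s : ι → ℝ) :
    countSketchInner x y h s =
      ∑ a, ∑ b, (x a * y b * if h a = h b then 1 else 0) * (s a * s b) := by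
  simp only [countSketchInner, countSketch, Finset.sum_mul_sum]
  rw [Finset.sum_comm]
  refine Finset.sum_congr rfl fun a _ => ?_
  rw [Finset.sum_comm]
  refine Finset.sum_congr rfl fun b _ => ?_
  rw [← sum_ite_eq_mul_ite_eq (h a) (h b), Finset.mul_sum, Finset.sum_mul]
  exact Finset.sum_congr rfl fun j _ => by ring

lemma abs_countSketchInner_le (x y : ι → ℝ) (h : ι → Fin B) {s : ι → ℝ}
    (hs : ∀ i, |s i| ≤ 1) :
    |countSketchInner x y h s| ≤ (∑ i, |x i|) * ∑ i, |y i| := by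
  rw [countSketchInner_eq_sum, Finset.sum_mul_sum]
  refine (Finset.abs_sum_le_sum_abs _ _).trans (Finset.sum_le_sum fun a _ => ?_)
  refine (Finset.abs_sum_le_sum_abs _ _).trans (Finset.sum_le_sum fun b _ => ?_)
  have hsign : |s a * s b| ≤ 1 := by
    rw [abs_mul]; exact mul_le_one₀ (hs a) (abs_nonneg _) (hs b)
  have hcollide : |(if h a = h b then 1 else 0 : ℝ)| ≤ 1 := by split_ifs <;> norm_num
  rw [abs_mul, abs_mul, abs_mul]
  calc |x a| * |y b| * |(if h a = h b then 1 else 0 : ℝ)| * |s a * s b|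
      ≤ |x a| * |y b| * 1 * 1 := by gcongr
    _ = |x a| * |y b| := by ring

lemma measurable_countSketchInner (x y : ι → ℝ) :
    Measurable fun q : (ι → Fin B) × (ι → ℝ) => countSketchInner x y q.1 q.2 := by
  refine measurable_from_prod_countable_right fun hv => ?_
  simp only [countSketchInner_eq_sum]
  fun_prop

variable {Ω : Type*} [MeasurableSpace Ω] {P : Measure Ω} {h : ι → Ω → Fin B} {r : ι → Ω → ℝ}

lemma integrable_countSketchInner_pow [IsFiniteMeasure P] (hhm : ∀ i, Measurable (h i))
    (hrm : ∀ i, Measurable (r i)) (hsq : ∀ i, ∀ᵐ ω ∂P, r i ω ^ 2 = 1) (x y : ι → ℝ) (m : ℕ) :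
    Integrable (fun ω => countSketchInner x y (fun i => h i ω) (fun i => r i ω) ^ m) P := by
  refine Integrable.of_bound (((measurable_countSketchInner x y).comp
    ((measurable_pi_lambda _ hhm).prodMk (measurable_pi_lambda _ hrm))).pow_const
      m).aestronglyMeasurable (((∑ i, |x i|) * ∑ i, |y i|) ^ m) ?_
  filter_upwards [ae_all_iff.2 hsq] with ω hω
  rw [Real.norm_eq_abs, abs_pow]
  exact pow_le_pow_left₀ (abs_nonneg _) (abs_countSketchInner_le x y _
    fun i => (sq_le_one_iff_abs_le_one _).1 (hω i).le) m

lemma integral_countSketchInner_pow_eq_integral_integral [IsFiniteMeasure P]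
    (hhm : ∀ i, Measurable (h i)) (hrm : ∀ i, Measurable (r i))
    (hsq : ∀ i, ∀ᵐ ω ∂P, r i ω ^ 2 = 1)
    (hhr : IndepFun (fun ω i => h i ω) (fun ω i => r i ω) P) (x y : ι → ℝ) (m : ℕ) :
    ∫ ω, countSketchInner x y (fun i => h i ω) (fun i => r i ω) ^ m ∂P =
      ∫ ω, ∫ ω', countSketchInner x y (fun i => h i ω) (fun i => r i ω') ^ m ∂P ∂P :=
  hhr.integral_comp_eq_integral_integral (measurable_pi_lambda _ hhm).aemeasurable
    (measurable_pi_lambda _ hrm).aemeasurable (F := fun q => countSketchInner x y q.1 q.2 ^ m)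
    ((measurable_countSketchInner x y).pow_const m).stronglyMeasurable
    (integrable_countSketchInner_pow hhm hrm hsq x y m)

end CountSketch

section CountSketchMoments

variable {ι : Type*} [Fintype ι] [DecidableEq ι] {B : ℕ}
  {Ω : Type*} [MeasurableSpace Ω] {P : Measure Ω} {h : ι → Ω → Fin B} {r : ι → Ω → ℝ}

lemma integral_countSketchInner_of_hash (hr : iIndepFun r P) (hrm : ∀ i, Measurable (r i))
    (hsq : ∀ i, ∀ᵐ ω ∂P, r i ω ^ 2 = 1) (hmean : ∀ i, ∫ ω, r i ω ∂P = 0) (x y : ι → ℝ)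
    (hv : ι → Fin B) :
    ∫ ω, countSketchInner x y hv (fun i => r i ω) ∂P = ∑ i, x i * y i := by
  simp only [countSketchInner_eq_sum, integral_sum_mul_sign_mul_sign hr hrm hsq hmean, if_true,
    mul_one]

lemma integral_countSketchInner_sq_of_hash (hr : iIndepFun r P) (hrm : ∀ i, Measurable (r i))
    (hsq : ∀ i, ∀ᵐ ω ∂P, r i ω ^ 2 = 1) (hmean : ∀ i, ∫ ω, r i ω ∂P = 0) (x y : ι → ℝ)
    (hv : ι → Fin B) :
    ∫ ω, countSketchInner x y hv (fun i => r i ω) ^ 2 ∂P =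
      (∑ i, x i * y i) ^ 2 - 2 * ∑ i, x i ^ 2 * y i ^ 2 +
        ∑ a, ∑ b, (x a ^ 2 * y b ^ 2 + x a * y a * (x b * y b)) * if hv a = hv b then 1 else 0 := by
  have hterm (a b : ι) : (x a * y b * if hv a = hv b then 1 else 0) ^ 2 +
      (x a * y b * if hv a = hv b then 1 else 0) * (x b * y a * if hv b = hv a then 1 else 0) =
        (x a ^ 2 * y b ^ 2 + x a * y a * (x b * y b)) * if hv a = hv b then 1 else 0 := by
    by_cases hab : hv a = hv b
    · simp only [hab, if_true]; ring
    · simp [hab, Ne.symm hab]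
  simp only [countSketchInner_eq_sum, integral_sq_sum_mul_sign_mul_sign hr hrm hsq hmean,
    if_true, mul_one]
  rw [add_assoc _ (∑ a, _), ← Finset.sum_add_distrib]
  simp only [← Finset.sum_add_distrib, hterm]
  simp only [mul_pow]
  ring

lemma integral_countSketchInner (hr : iIndepFun r P) (hhm : ∀ i, Measurable (h i))
    (hrm : ∀ i, Measurable (r i)) (hsq : ∀ i, ∀ᵐ ω ∂P, r i ω ^ 2 = 1)
    (hmean : ∀ i, ∫ ω, r i ω ∂P = 0)
    (hhr : IndepFun (fun ω i => h i ω) (fun ω i => r i ω) P) (x y : ι → ℝ) :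
    ∫ ω, countSketchInner x y (fun i => h i ω) (fun i => r i ω) ∂P = ∑ i, x i * y i := by
  have := hr.isProbabilityMeasure
  have hcond := integral_countSketchInner_pow_eq_integral_integral hhm hrm hsq hhr x y 1
  simp only [pow_one, integral_countSketchInner_of_hash hr hrm hsq hmean] at hcond
  simpa using hcond

lemma integral_countSketchInner_sq (hh : iIndepFun h P) (hr : iIndepFun r P)
    (hhm : ∀ i, Measurable (h i)) (hrm : ∀ i, Measurable (r i))
    (hunif : ∀ i j, P {ω | h i ω = j} = (B : ℝ≥0∞)⁻¹) (hsq : ∀ i, ∀ᵐ ω ∂P, r i ω ^ 2 = 1)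
    (hmean : ∀ i, ∫ ω, r i ω ∂P = 0)
    (hhr : IndepFun (fun ω i => h i ω) (fun ω i => r i ω) P) (x y : ι → ℝ) :
    ∫ ω, countSketchInner x y (fun i => h i ω) (fun i => r i ω) ^ 2 ∂P =
      (∑ i, x i * y i) ^ 2 + (B : ℝ)⁻¹ * ((∑ i, x i ^ 2) * (∑ i, y i ^ 2) +
        (∑ i, x i * y i) ^ 2 - 2 * ∑ i, x i ^ 2 * y i ^ 2) := by
  have := hr.isProbabilityMeasure
  have hcollide (a b : ι) : Integrable (fun ω => (if h a ω = h b ω then 1 else 0 : ℝ)) P :=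
    Integrable.of_bound (Measurable.ite (measurableSet_eq_fun (hhm a) (hhm b)) measurable_const
      measurable_const).aestronglyMeasurable 1 (ae_of_all _ fun ω => by split_ifs <;> norm_num)
  have hsplit (a b : ι) (c : ℝ) : c * (if a = b then 1 else (B : ℝ)⁻¹) =
      (B : ℝ)⁻¹ * c + if a = b then (1 - (B : ℝ)⁻¹) * c else 0 := by
    split_ifs <;> ring
  have hdiag : ∑ i, x i * y i * (x i * y i) = ∑ i, x i ^ 2 * y i ^ 2 :=
    Finset.sum_congr rfl fun i _ => by ring
  rw [integral_countSketchInner_pow_eq_integral_integral hhm hrm hsq hhr x y 2]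
  simp only [integral_countSketchInner_sq_of_hash hr hrm hsq hmean]
  rw [integral_add (integrable_const _) (integrable_finsetSum _ fun a _ =>
      integrable_finsetSum _ fun b _ => (hcollide a b).const_mul _), integral_const,
    integral_finsetSum _ fun a _ => integrable_finsetSum _ fun b _ => (hcollide a b).const_mul _,
    Finset.sum_congr rfl fun a _ => integral_finsetSum _ fun b _ => (hcollide a b).const_mul _]
  simp only [integral_const_mul, integral_ite_hash_eq_hash hh hhm hunif, hsplit,
    Finset.sum_add_distrib, Finset.sum_ite_eq, Finset.mem_univ, if_true, ← Finset.mul_sum,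
    probReal_univ, one_smul]
  rw [← Finset.sum_mul, ← Finset.sum_mul, hdiag]
  ring

end CountSketchMoments

section Rademacher

variable {Ω : Type*} [MeasurableSpace Ω] {P : Measure Ω} [IsProbabilityMeasure P] {f : Ω → ℝ}

lemma ae_eq_one_or_eq_neg_one_of_measure_eq_half (hf : Measurable f) (h1 : P {ω | f ω = 1} = 1 / 2)
    (h2 : P {ω | f ω = -1} = 1 / 2) : ∀ᵐ ω ∂P, f ω = 1 ∨ f ω = -1 := by
  have hdisj : Disjoint {ω | f ω = 1} {ω | f ω = -1} :=
    Set.disjoint_left.2 fun ω (h1 : f ω = 1) (h2 : f ω = -1) => by linarith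
  refine (mem_ae_iff_prob_eq_one ((hf (measurableSet_singleton 1)).union
    (hf (measurableSet_singleton (-1))))).2 ?_
  change P ({ω | f ω = 1} ∪ {ω | f ω = -1}) = 1
  rw [measure_union hdisj (hf (measurableSet_singleton (-1))), h1, h2, ENNReal.add_halves]

lemma integral_eq_zero_of_measure_eq_half (hf : Measurable f) (h1 : P {ω | f ω = 1} = 1 / 2)
    (h2 : P {ω | f ω = -1} = 1 / 2) : ∫ ω, f ω ∂P = 0 := by
  have hs1 : MeasurableSet {ω | f ω = 1} := hf (measurableSet_singleton 1)
  have hs2 : MeasurableSet {ω | f ω = -1} := hf (measurableSet_singleton (-1))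
  have hdecomp : f =ᵐ[P] fun ω => {ω | f ω = 1}.indicator 1 ω - {ω | f ω = -1}.indicator 1 ω :=
    (ae_eq_one_or_eq_neg_one_of_measure_eq_half hf h1 h2).mono fun ω hω => by
      rcases hω with hω | hω <;> norm_num [Set.indicator_apply, hω]
  rw [integral_congr_ae hdecomp, integral_sub ((integrable_const 1).indicator hs1)
    ((integrable_const 1).indicator hs2), integral_indicator_one hs1, integral_indicator_one hs2,
    measureReal_def, measureReal_def, h1, h2, sub_self]

lemma ae_sq_eq_one_of_measure_eq_half (hf : Measurable f) (h1 : P {ω | f ω = 1} = 1 / 2)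
    (h2 : P {ω | f ω = -1} = 1 / 2) : ∀ᵐ ω ∂P, f ω ^ 2 = 1 :=
  (ae_eq_one_or_eq_neg_one_of_measure_eq_half hf h1 h2).mono fun ω hω => by
    rcases hω with hω | hω <;> norm_num [hω]

end Rademacher

section Bernoulli

variable {Ω ι : Type*} [MeasurableSpace Ω] {P : Measure Ω} [IsProbabilityMeasure P]

lemma variance_indicator_one {A : Set Ω} (hA : MeasurableSet A) :
    Var[A.indicator (fun _ => (1 : ℝ)); P] = P.real A * (1 - P.real A) := by
  have hsq : (A.indicator fun _ => (1 : ℝ)) ^ 2 = A.indicator fun _ => 1 := by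
    ext ω; by_cases hω : ω ∈ A <;> simp [hω]
  rw [variance_eq_sub (memLp_indicator_const 2 hA 1 (Or.inr (measure_ne_top _ _))), hsq,
    integral_indicator_const _ hA, smul_eq_mul, mul_one]
  ring

lemma variance_sum_indicator_one [Fintype ι] {A : ι → Set Ω} (hA : ∀ i, MeasurableSet (A i))
    (hind : iIndepFun (fun i => (A i).indicator (fun _ => (1 : ℝ))) P) {p : ℝ}
    (hp : ∀ i, P.real (A i) = p) :
    Var[∑ i, (A i).indicator (fun _ => (1 : ℝ)); P] = Fintype.card ι * (p * (1 - p)) := by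
  rw [IndepFun.variance_sum (fun i _ => memLp_indicator_const 2 (hA i) 1
    (Or.inr (measure_ne_top _ _))) fun i _ j _ hij => hind.indepFun hij]
  simp [variance_indicator_one (hA _), hp]

lemma integral_sum_indicator_one [Fintype ι] {A : ι → Set Ω} (hA : ∀ i, MeasurableSet (A i))
    {p : ℝ} (hp : ∀ i, P.real (A i) = p) :
    ∫ ω, ∑ i, (A i).indicator (fun _ => (1 : ℝ)) ω ∂P = Fintype.card ι * p := by
  rw [integral_finsetSum _ fun i _ => (integrable_const (1 : ℝ)).indicator (hA i)]
  simp [integral_indicator_const _ (hA _), hp]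

lemma integral_sq_sum_indicator_one [Fintype ι] {A : ι → Set Ω} (hA : ∀ i, MeasurableSet (A i))
    (hind : iIndepFun (fun i => (A i).indicator (fun _ => (1 : ℝ))) P) {p : ℝ}
    (hp : ∀ i, P.real (A i) = p) :
    ∫ ω, (∑ i, (A i).indicator (fun _ => (1 : ℝ)) ω) ^ 2 ∂P =
      Fintype.card ι * (p * (1 - p)) + (Fintype.card ι * p) ^ 2 := by
  have hL2 : MemLp (∑ i, (A i).indicator fun _ => (1 : ℝ)) 2 P :=
    memLp_finsetSum' _ fun i _ => memLp_indicator_const 2 (hA i) 1 (Or.inr (measure_ne_top _ _))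
  rw [← variance_sum_indicator_one hA hind hp, ← integral_sum_indicator_one hA hp,
    variance_eq_sub hL2]
  simp [Finset.sum_apply]

end Bernoulli

section Collisions

variable {Ω α : Type*} [MeasurableSpace Ω] {P : Measure Ω} [IsProbabilityMeasure P]
  [MeasurableSpace α] [MeasurableSingletonClass α] [Countable α] [DecidableEq α] {k : ℕ}
  {X Y : Fin k → Ω → α} {p : ℝ}

lemma integral_sum_ite_eq (hXm : ∀ l, Measurable (X l)) (hYm : ∀ l, Measurable (Y l))
    (hp : ∀ l, P.real {ω | X l ω = Y l ω} = p) :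
    ∫ ω, ∑ l, (if X l ω = Y l ω then 1 else 0) ∂P = k * p := by
  simpa [Set.indicator_apply] using
    integral_sum_indicator_one (fun l => measurableSet_eq_fun (hXm l) (hYm l)) hp

lemma integral_sq_sum_ite_eq (hXm : ∀ l, Measurable (X l)) (hYm : ∀ l, Measurable (Y l))
    (hind : iIndepFun (fun l ω => (X l ω, Y l ω)) P) (hp : ∀ l, P.real {ω | X l ω = Y l ω} = p) :
    ∫ ω, (∑ l, (if X l ω = Y l ω then 1 else 0)) ^ 2 ∂P = k * (p * (1 - p)) + (k * p) ^ 2 := by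
  have hind' : iIndepFun (fun l => {ω | X l ω = Y l ω}.indicator fun _ => (1 : ℝ)) P := by
    convert hind.comp (fun _ q => if q.1 = q.2 then (1 : ℝ) else 0)
      (fun _ => measurable_of_countable _) using 1
    funext l ω
    simp [Set.indicator_apply]
  simpa [Set.indicator_apply] using
    integral_sq_sum_indicator_one (fun l => measurableSet_eq_fun (hXm l) (hYm l)) hind' hp

end Collisions

section OneHot

variable {k n B : ℕ}

def oneHot (v : Fin k → Fin n) (i : Fin k × Fin n) : ℝ :=
  if v i.1 = i.2 then 1 else 0

lemma oneHot_sq (v : Fin k → Fin n) (i : Fin k × Fin n) : oneHot v i ^ 2 = oneHot v i := by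
  unfold oneHot; split_ifs <;> norm_num

lemma abs_oneHot (v : Fin k → Fin n) (i : Fin k × Fin n) : |oneHot v i| = oneHot v i :=
  abs_of_nonneg (by unfold oneHot; split_ifs <;> norm_num)

lemma sum_oneHot (v : Fin k → Fin n) : ∑ i, oneHot v i = k := by
  rw [Fintype.sum_prod_type]
  simp [oneHot]

lemma sum_oneHot_mul_oneHot (v w : Fin k → Fin n) :
    ∑ i, oneHot v i * oneHot w i = ∑ l, if v l = w l then 1 else 0 := by
  rw [Fintype.sum_prod_type]
  exact Finset.sum_congr rfl fun l _ => sum_ite_eq_mul_ite_eq (v l) (w l)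

lemma measurable_countSketchInner_oneHot_prod :
    Measurable fun p : (Fin k → Fin n × Fin n) × ((Fin k × Fin n → Fin B) × (Fin k × Fin n → ℝ)) =>
      countSketchInner (oneHot fun l => (p.1 l).1) (oneHot fun l => (p.1 l).2) p.2.1 p.2.2 :=
  measurable_from_prod_countable_right fun v =>
    measurable_countSketchInner (oneHot fun l => (v l).1) (oneHot fun l => (v l).2)

variable {Ω : Type*} {X Y : Fin k → Ω → Fin n} {h : Fin k × Fin n → Ω → Fin B}
  {r : Fin k × Fin n → Ω → ℝ}

lemma sum_oneHotSketch_mul_oneHotSketch (ω : Ω) :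
    ∑ j, oneHotSketch X h r j ω * oneHotSketch Y h r j ω =
      countSketchInner (oneHot fun l => X l ω) (oneHot fun l => Y l ω) (fun i => h i ω)
        (fun i => r i ω) :=
  rfl

variable [MeasurableSpace Ω] {P : Measure Ω}

lemma ae_abs_countSketchInner_oneHot_le (hsq : ∀ i, ∀ᵐ ω ∂P, r i ω ^ 2 = 1) :
    ∀ᵐ ω ∂P, |countSketchInner (oneHot fun l => X l ω) (oneHot fun l => Y l ω)
      (fun i => h i ω) (fun i => r i ω)| ≤ k * k := by
  filter_upwards [ae_all_iff.2 hsq] with ω hω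
  have hbound := abs_countSketchInner_le (oneHot fun l => X l ω) (oneHot fun l => Y l ω)
    (fun i => h i ω) fun i => (sq_le_one_iff_abs_le_one _).1 (hω i).le
  simpa only [abs_oneHot, sum_oneHot] using hbound

lemma measurable_countSketchInner_oneHot (hXm : ∀ l, Measurable (X l))
    (hYm : ∀ l, Measurable (Y l)) (hhm : ∀ i, Measurable (h i)) (hrm : ∀ i, Measurable (r i)) :
    Measurable fun ω => countSketchInner (oneHot fun l => X l ω) (oneHot fun l => Y l ω)
      (fun i => h i ω) (fun i => r i ω) := by
  have hV : Measurable fun ω l => (X l ω, Y l ω) :=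
    measurable_pi_lambda _ fun l => (hXm l).prodMk (hYm l)
  have hHR : Measurable fun ω => (fun i => h i ω, fun i => r i ω) :=
    (measurable_pi_lambda _ hhm).prodMk (measurable_pi_lambda _ hrm)
  have hcomp := (measurable_countSketchInner_oneHot_prod (k := k) (n := n) (B := B)).comp
    (hV.prodMk hHR)
  exact hcomp

lemma integral_countSketchInner_oneHot_pow_eq_integral_integral [IsFiniteMeasure P]
    (hXm : ∀ l, Measurable (X l)) (hYm : ∀ l, Measurable (Y l)) (hhm : ∀ i, Measurable (h i))
    (hrm : ∀ i, Measurable (r i)) (hsq : ∀ i, ∀ᵐ ω ∂P, r i ω ^ 2 = 1)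
    (hsk_XY : IndepFun (fun ω => (fun i => h i ω, fun i => r i ω))
      (fun ω => fun l => (X l ω, Y l ω)) P) (m : ℕ) :
    ∫ ω, countSketchInner (oneHot fun l => X l ω) (oneHot fun l => Y l ω) (fun i => h i ω)
        (fun i => r i ω) ^ m ∂P =
      ∫ ω, ∫ ω', countSketchInner (oneHot fun l => X l ω) (oneHot fun l => Y l ω)
        (fun i => h i ω') (fun i => r i ω') ^ m ∂P ∂P := by
  have hV : Measurable fun ω l => (X l ω, Y l ω) :=
    measurable_pi_lambda _ fun l => (hXm l).prodMk (hYm l)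
  have hHR : Measurable fun ω => (fun i => h i ω, fun i => r i ω) :=
    (measurable_pi_lambda _ hhm).prodMk (measurable_pi_lambda _ hrm)
  refine hsk_XY.symm.integral_comp_eq_integral_integral hV.aemeasurable hHR.aemeasurable
    (measurable_countSketchInner_oneHot_prod.pow_const m).stronglyMeasurable
    (Integrable.of_bound ((measurable_countSketchInner_oneHot hXm hYm hhm hrm).pow_const
      m).aestronglyMeasurable (((k : ℝ) * k) ^ m) ?_)
  filter_upwards [ae_abs_countSketchInner_oneHot_le (X := X) (Y := Y) (h := h) hsq] with ω hω
  rw [Real.norm_eq_abs, abs_pow]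
  exact pow_le_pow_left₀ (abs_nonneg _) hω m

lemma integral_countSketchInner_oneHot [IsProbabilityMeasure P] (hr : iIndepFun r P)
    (hXm : ∀ l, Measurable (X l)) (hYm : ∀ l, Measurable (Y l)) (hhm : ∀ i, Measurable (h i))
    (hrm : ∀ i, Measurable (r i)) (hsq : ∀ i, ∀ᵐ ω ∂P, r i ω ^ 2 = 1)
    (hmean : ∀ i, ∫ ω, r i ω ∂P = 0) (hhr : IndepFun (fun ω i => h i ω) (fun ω i => r i ω) P)
    (hsk_XY : IndepFun (fun ω => (fun i => h i ω, fun i => r i ω))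
      (fun ω => fun l => (X l ω, Y l ω)) P) :
    ∫ ω, countSketchInner (oneHot fun l => X l ω) (oneHot fun l => Y l ω) (fun i => h i ω)
        (fun i => r i ω) ∂P = ∫ ω, ∑ l, (if X l ω = Y l ω then 1 else 0) ∂P := by
  have hcond :=
    integral_countSketchInner_oneHot_pow_eq_integral_integral hXm hYm hhm hrm hsq hsk_XY 1
  simp only [pow_one] at hcond
  simp only [hcond, integral_countSketchInner hr hhm hrm hsq hmean hhr, sum_oneHot_mul_oneHot]

lemma integral_countSketchInner_oneHot_sq [IsProbabilityMeasure P] (hh : iIndepFun h P)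
    (hr : iIndepFun r P) (hXm : ∀ l, Measurable (X l)) (hYm : ∀ l, Measurable (Y l))
    (hhm : ∀ i, Measurable (h i)) (hrm : ∀ i, Measurable (r i))
    (hunif : ∀ i j, P {ω | h i ω = j} = (B : ℝ≥0∞)⁻¹) (hsq : ∀ i, ∀ᵐ ω ∂P, r i ω ^ 2 = 1)
    (hmean : ∀ i, ∫ ω, r i ω ∂P = 0) (hhr : IndepFun (fun ω i => h i ω) (fun ω i => r i ω) P)
    (hsk_XY : IndepFun (fun ω => (fun i => h i ω, fun i => r i ω))
      (fun ω => fun l => (X l ω, Y l ω)) P) :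
    ∫ ω, countSketchInner (oneHot fun l => X l ω) (oneHot fun l => Y l ω) (fun i => h i ω)
        (fun i => r i ω) ^ 2 ∂P =
      ∫ ω, (∑ l, (if X l ω = Y l ω then 1 else 0)) ^ 2 ∂P + (B : ℝ)⁻¹ * (k * k +
        ∫ ω, (∑ l, (if X l ω = Y l ω then 1 else 0)) ^ 2 ∂P -
          2 * ∫ ω, ∑ l, (if X l ω = Y l ω then 1 else 0) ∂P) := by
  simp only [
    integral_countSketchInner_oneHot_pow_eq_integral_integral hXm hYm hhm hrm hsq hsk_XY 2,
    integral_countSketchInner_sq hh hr hhm hrm hunif hsq hmean hhr, oneHot_sq, sum_oneHot,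
    sum_oneHot_mul_oneHot]
  set N : Ω → ℝ := fun ω => ∑ l, if X l ω = Y l ω then 1 else 0
  have hNmem : MemLp N ∞ P := memLp_finsetSum _ fun l _ => memLp_top_of_bound
    (Measurable.ite (measurableSet_eq_fun (hXm l) (hYm l)) measurable_const
      measurable_const).aestronglyMeasurable 1 (ae_of_all _ fun ω => by split_ifs <;> norm_num)
  have hNint : Integrable N P := hNmem.integrable le_top
  have hN2int : Integrable (fun ω => N ω ^ 2) P := (hNmem.mono_exponent le_top).integrable_sq
  have hconst_add : Integrable (fun ω => (k : ℝ) * k + N ω ^ 2) P :=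
    (integrable_const _).add hN2int
  have hlin : Integrable (fun ω => (k : ℝ) * k + N ω ^ 2 - 2 * N ω) P :=
    hconst_add.sub (hNint.const_mul 2)
  rw [integral_add hN2int (hlin.const_mul _), integral_const_mul,
    integral_sub hconst_add (hNint.const_mul 2), integral_add (integrable_const _) hN2int,
    integral_const_mul, integral_const_mul]
  simp only [integral_const, probReal_univ, one_smul]
  rfl

end OneHot

theorem gcws_countSketch_mean_variance_general {Ω : Type*} [MeasurableSpace Ω] (P : Measure Ω)
    [IsProbabilityMeasure P] (b k B : ℕ)
    (Pb : ℝ) (hPb0 : 0 ≤ Pb)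
    (X Y : Fin k → Ω → Fin (2 ^ b))
    (hXm : ∀ j, Measurable (X j)) (hYm : ∀ j, Measurable (Y j))
    (hpairs_indep : iIndepFun (fun j ω => (X j ω, Y j ω)) P)
    (hcollision : ∀ j, P {ω | X j ω = Y j ω} = ENNReal.ofReal Pb)
    (h : Fin k × Fin (2 ^ b) → Ω → Fin B) (r : Fin k × Fin (2 ^ b) → Ω → ℝ)
    (hhm : ∀ i, Measurable (h i)) (hrm : ∀ i, Measurable (r i))
    (hunif : ∀ i, ∀ j : Fin B, P {ω | h i ω = j} = (B : ℝ≥0∞)⁻¹)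
    (hhiid : iIndepFun h P)
    (hriid : iIndepFun r P)
    (hrad : ∀ i, P {ω | r i ω = 1} = 1 / 2 ∧ P {ω | r i ω = -1} = 1 / 2)
    (hhr : IndepFun (fun ω i => h i ω) (fun ω i => r i ω) P)
    (hsk_XY : IndepFun (fun ω => (fun i => h i ω, fun i => r i ω))
      (fun ω => fun j => (X j ω, Y j ω)) P) :
    ∫ ω, (∑ j, oneHotSketch X h r j ω * oneHotSketch Y h r j ω) ∂P = k * Pb ∧
      variance (fun ω => ∑ j, oneHotSketch X h r j ω * oneHotSketch Y h r j ω) P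
        = (1 / B) * ((k : ℝ) ^ 2 + (k : ℝ) ^ 2 * Pb ^ 2 - (k : ℝ) * Pb ^ 2 - (k : ℝ) * Pb)
          + (k : ℝ) * Pb * (1 - Pb) := by
  have hsq i := ae_sq_eq_one_of_measure_eq_half (hrm i) (hrad i).1 (hrad i).2
  have hmean i := integral_eq_zero_of_measure_eq_half (hrm i) (hrad i).1 (hrad i).2
  have hPb l : P.real {ω | X l ω = Y l ω} = Pb := by simp [measureReal_def, hcollision, hPb0]
  have hSL2 : MemLp (fun ω => ∑ j, oneHotSketch X h r j ω * oneHotSketch Y h r j ω) 2 P :=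
    (memLp_top_of_bound (measurable_countSketchInner_oneHot hXm hYm hhm hrm).aestronglyMeasurable
      _ (ae_abs_countSketchInner_oneHot_le hsq)).mono_exponent le_top
  have hS1 := integral_countSketchInner_oneHot hriid hXm hYm hhm hrm hsq hmean hhr hsk_XY
  have hS2 := integral_countSketchInner_oneHot_sq hhiid hriid hXm hYm hhm hrm hunif hsq hmean hhr
    hsk_XY
  simp only [← sum_oneHotSketch_mul_oneHotSketch, integral_sum_ite_eq hXm hYm hPb,
    integral_sq_sum_ite_eq hXm hYm hpairs_indep hPb] at hS1 hS2
  refine ⟨hS1, ?_⟩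
  rw [variance_eq_sub hSL2]
  simp only [Pi.pow_apply, hS1, hS2]
  ring

/-- with `k` i.i.d. pairs `(X_j, Y_j)` of `b`-bit hash values with per-pair
collision probability `P_b`, one-hot encoded and count-sketched with `B` bins via shared
randomness `(h, r)` (i.i.d. uniform buckets, i.i.d. symmetric Rademacher signs, mutually
independent and independent of all `(X_j, Y_j)`):
`E[⟨z,w⟩] = k·P_b` and `Var(⟨z,w⟩) = (1/B)·[k² + k²P_b² - kP_b² - kP_b] + kP_b(1-P_b)`. -/
theorem gcws_countSketch_mean_variance {Ω : Type*} [MeasurableSpace Ω] (P : Measure Ω)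
    [IsProbabilityMeasure P] (b k B : ℕ) (hb : 1 ≤ b) (hk : 1 ≤ k) (hB : 1 ≤ B)
    (Pb : ℝ) (hPb0 : 0 ≤ Pb) (hPb1 : Pb ≤ 1)
    (X Y : Fin k → Ω → Fin (2 ^ b))
    (hXm : ∀ j, Measurable (X j)) (hYm : ∀ j, Measurable (Y j))
    (hpairs_indep : iIndepFun (fun j ω => (X j ω, Y j ω)) P)
    (hpairs_ident : ∀ j j', IdentDistrib (fun ω => (X j ω, Y j ω))
      (fun ω => (X j' ω, Y j' ω)) P P)
    (hcollision : ∀ j, P {ω | X j ω = Y j ω} = ENNReal.ofReal Pb)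
    (h : Fin k × Fin (2 ^ b) → Ω → Fin B) (r : Fin k × Fin (2 ^ b) → Ω → ℝ)
    (hhm : ∀ i, Measurable (h i)) (hrm : ∀ i, Measurable (r i))
    (hunif : ∀ i, ∀ j : Fin B, P {ω | h i ω = j} = (B : ℝ≥0∞)⁻¹)
    (hhiid : iIndepFun h P)
    (hriid : iIndepFun r P)
    (hrad : ∀ i, P {ω | r i ω = 1} = 1 / 2 ∧ P {ω | r i ω = -1} = 1 / 2)
    (hhr : IndepFun (fun ω i => h i ω) (fun ω i => r i ω) P)
    (hsk_XY : IndepFun (fun ω => (fun i => h i ω, fun i => r i ω))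
      (fun ω => fun j => (X j ω, Y j ω)) P) :
    ∫ ω, (∑ j, oneHotSketch X h r j ω * oneHotSketch Y h r j ω) ∂P = k * Pb ∧
      variance (fun ω => ∑ j, oneHotSketch X h r j ω * oneHotSketch Y h r j ω) P
        = (1 / B) * ((k : ℝ) ^ 2 + (k : ℝ) ^ 2 * Pb ^ 2 - (k : ℝ) * Pb ^ 2 - (k : ℝ) * Pb)
          + (k : ℝ) * Pb * (1 - Pb) :=
  gcws_countSketch_mean_variance_general P b k B Pb hPb0 X Y hXm hYm hpairs_indep hcollision h r hhm
    hrm hunif hhiid hriid hrad hhr hsk_XY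
end

section
/- Let γ > 0 and ρ ∈ [−1, 1]. Let (x, y) be jointly Gaussian with x ~ N(0,1), y ~ N(0,1) and E[xy] = ρ, and let w ~ Uniform(0, 2π) be independent of (x, y). Define X = √2·cos(√γ·x + w) and Y = √2·cos(√γ·y + w). Then E[X·Y] = e^{−γ(1−ρ)}. -/
open MeasureTheory ProbabilityTheory Real
open scoped NNReal ENNReal

lemma integral_cos_gaussianReal (v : ℝ≥0) :
    ∫ z, Real.cos z ∂(gaussianReal 0 v) = Real.exp (-(v : ℝ) / 2) := by
  rcases eq_or_ne v 0 with rfl | hv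
  · simp [gaussianReal_zero_var]
  · have hvpos : (0 : ℝ) < v := lt_of_le_of_ne v.coe_nonneg (by exact_mod_cast (Ne.symm hv))
    rw [gaussianReal_of_var_ne_zero _ hv]
    have hpdf : gaussianPDF 0 v = fun z => ((gaussianPDFReal 0 v z).toNNReal : ℝ≥0∞) := by
      ext z; rfl
    rw [hpdf, integral_withDensity_eq_integral_smul
      ((measurable_gaussianPDFReal 0 v).real_toNNReal)]
    set b : ℂ := ((-(1 / (2 * (v : ℝ))) : ℝ) : ℂ) with hb_def
    have hb : b.re < 0 := by
      rw [hb_def, Complex.ofReal_re]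
      have : (0:ℝ) < 1 / (2 * (v:ℝ)) := by positivity
      linarith
    have hre : ∀ z : ℝ, (Complex.exp (b * z ^ 2 + Complex.I * z + 0)).re
        = Real.exp (-z ^ 2 / (2 * v)) * Real.cos z := by
      intro z
      have harg : b * (z : ℂ) ^ 2 + Complex.I * z + 0
          = ((-z ^ 2 / (2 * (v:ℝ)) : ℝ) : ℂ) + (z : ℝ) * Complex.I := by
        rw [hb_def]; push_cast; field_simp; ring
      rw [harg, Complex.exp_re]
      simp only [Complex.add_re, Complex.add_im, Complex.ofReal_re, Complex.ofReal_im,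
        Complex.mul_re, Complex.mul_im, Complex.I_re, Complex.I_im]
      norm_num
    have key : ∫ z : ℝ, Complex.exp (b * z ^ 2 + Complex.I * z + 0)
        = ((Real.sqrt (2 * π * v) : ℝ) : ℂ) * ((Real.exp (-(v : ℝ) / 2) : ℝ) : ℂ) := by
      rw [integral_cexp_quadratic hb Complex.I 0]
      congr 1
      · rw [show π / -b = ((2 * π * v : ℝ) : ℂ) by
          rw [hb_def]; push_cast; field_simp]
        rw [show (1 / 2 : ℂ) = ((1 / 2 : ℝ) : ℂ) by push_cast; ring]
        rw [← Complex.ofReal_cpow (by positivity), Real.sqrt_eq_rpow]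
      · rw [show (0 : ℂ) - Complex.I ^ 2 / (4 * b) = ((-(v : ℝ) / 2 : ℝ) : ℂ) by
          rw [hb_def, Complex.I_sq]; push_cast; field_simp; ring]
        exact (Complex.ofReal_exp _).symm
    have hint : Integrable (fun z : ℝ => Complex.exp (b * z ^ 2 + Complex.I * z + 0)) :=
      integrable_cexp_quadratic' hb Complex.I 0
    have lhs_eq : ∫ z : ℝ, (gaussianPDFReal 0 v z).toNNReal • Real.cos z
        = (Real.sqrt (2 * π * v))⁻¹ * ∫ z : ℝ, (Complex.exp (b * z ^ 2 + Complex.I * z + 0)).re := by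
      rw [← integral_const_mul]
      congr 1
      ext z
      rw [NNReal.smul_def, smul_eq_mul, Real.coe_toNNReal _ (gaussianPDFReal_nonneg 0 v z),
        hre z, gaussianPDFReal]
      ring_nf
    have h2 : ∫ z : ℝ, (Complex.exp (b * z ^ 2 + Complex.I * z + 0)).re
        = (∫ z : ℝ, Complex.exp (b * z ^ 2 + Complex.I * z + 0)).re := by
      simpa using integral_re hint
    rw [lhs_eq, h2, key, ← Complex.ofReal_mul, Complex.ofReal_re]
    have hs : Real.sqrt (2 * π * v) ≠ 0 := by positivity
    field_simp

lemma integral_cos_unif (s : ℝ) :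
    ∫ u, Real.cos (s + 2 * u)
      ∂((ENNReal.ofReal (2 * π))⁻¹ • volume.restrict (Set.Ioo 0 (2 * π))) = 0 := by
  rw [integral_smul_measure]
  have h0 : ∫ u in Set.Ioo 0 (2 * π), Real.cos (s + 2 * u) = 0 := by
    rw [← integral_Ioc_eq_integral_Ioo,
      ← intervalIntegral.integral_of_le (by positivity : (0:ℝ) ≤ 2 * π)]
    have : ∀ u : ℝ, Real.cos (s + 2 * u) = Real.cos (2 * u + s) := by
      intro u; rw [add_comm]
    simp_rw [this]
    rw [intervalIntegral.integral_comp_mul_add Real.cos two_ne_zero s]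
    simp [integral_cos]
    rw [show 2 * (2 * π) + s = (s + 2*π) + 2*π by ring, Real.sin_add_two_pi,
      Real.sin_add_two_pi]
    simp [add_comm]
  rw [h0, smul_zero]

/-- if `(x, y)` is jointly Gaussian (every linear combination `a·x + b·y` is
`N(0, a² + 2abρ + b²)`) with standard normal marginals and correlation `ρ ∈ [-1,1]`, and
`w ~ Uniform(0, 2π)` is independent of `(x, y)`, then for `γ > 0`, the random Fourier
features `X = √2·cos(√γ·x + w)`, `Y = √2·cos(√γ·y + w)` satisfy `E[XY] = e^{-γ(1-ρ)}`. -/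
theorem rff_unbiased {Ω : Type*} [MeasurableSpace Ω] (P : Measure Ω)
    [IsProbabilityMeasure P] (γ ρ : ℝ) (hγ : 0 < γ) (hρ : -1 ≤ ρ ∧ ρ ≤ 1)
    (x y w : Ω → ℝ) (hxm : Measurable x) (hym : Measurable y) (hwm : Measurable w)
    (hgauss : ∀ a b : ℝ, Measure.map (fun ω => a * x ω + b * y ω) P
      = gaussianReal 0 (Real.toNNReal (a ^ 2 + 2 * a * b * ρ + b ^ 2)))
    (hw : Measure.map w P
      = (ENNReal.ofReal (2 * π))⁻¹ • volume.restrict (Set.Ioo 0 (2 * π)))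
    (hindep : IndepFun (fun ω => (x ω, y ω)) w P) :
    ∫ ω, (Real.sqrt 2 * Real.cos (Real.sqrt γ * x ω + w ω))
        * (Real.sqrt 2 * Real.cos (Real.sqrt γ * y ω + w ω)) ∂P
      = Real.exp (-(γ * (1 - ρ))) := by
  obtain ⟨hρ1, hρ2⟩ := hρ
  set g : ℝ := Real.sqrt γ with hg_def
  have hg2 : g ^ 2 = γ := Real.sq_sqrt hγ.le
  -- pointwise product-to-sum identity
  have hpt : ∀ ω, (Real.sqrt 2 * Real.cos (g * x ω + w ω))
        * (Real.sqrt 2 * Real.cos (g * y ω + w ω))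
      = Real.cos (g * x ω + (-g) * y ω)
        + Real.cos ((g * x ω + g * y ω) + 2 * w ω) := by
    intro ω
    have h2 : Real.sqrt 2 * Real.sqrt 2 = 2 := Real.mul_self_sqrt (by norm_num)
    have key : ∀ A B : ℝ, Real.cos (A - B) + Real.cos (A + B)
        = 2 * (Real.cos A * Real.cos B) := by
      intro A B; rw [Real.cos_sub, Real.cos_add]; ring
    have e1 : g * x ω + (-g) * y ω = (g * x ω + w ω) - (g * y ω + w ω) := by ring
    have e2 : (g * x ω + g * y ω) + 2 * w ω = (g * x ω + w ω) + (g * y ω + w ω) := by ring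
    rw [e1, e2, key]
    linear_combination Real.cos (g * x ω + w ω) * Real.cos (g * y ω + w ω) * h2
  have hbd : ∀ (f : Ω → ℝ) (μ : Measure Ω) [IsProbabilityMeasure μ], Measurable f →
      Integrable (fun ω => Real.cos (f ω)) μ := by
    intro f μ _ hf
    exact (integrable_const 1).mono' (Real.measurable_cos.comp hf).aestronglyMeasurable
      (ae_of_all _ fun ω => by simpa using Real.abs_cos_le_one (f ω))
  have hm1 : Measurable fun ω => g * x ω + (-g) * y ω := by fun_prop
  have hm2 : Measurable fun ω => (g * x ω + g * y ω) + 2 * w ω := by fun_prop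
  have int1 := hbd _ P hm1
  have int2 := hbd _ P hm2
  -- first integral
  have hvar : g ^ 2 + 2 * g * (-g) * ρ + (-g) ^ 2 = 2 * (γ * (1 - ρ)) := by
    nlinarith [hg2]
  have E1 : ∫ ω, Real.cos (g * x ω + (-g) * y ω) ∂P = Real.exp (-(γ * (1 - ρ))) := by
    rw [← integral_map hm1.aemeasurable Real.measurable_cos.aestronglyMeasurable,
      hgauss g (-g), hvar, integral_cos_gaussianReal]
    rw [Real.coe_toNNReal _ (by nlinarith)]
    congr 1; ring
  -- second integral
  set S : Ω → ℝ := fun ω => g * x ω + g * y ω with hS_def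
  have hSm : Measurable S := by fun_prop
  have hSw : IndepFun S w P := by
    have : S = (fun p : ℝ × ℝ => g * p.1 + g * p.2) ∘ (fun ω => (x ω, y ω)) := rfl
    rw [this]
    exact hindep.comp (by fun_prop) measurable_id
  have hmap : Measure.map (fun ω => (S ω, w ω)) P
      = (Measure.map S P).prod (Measure.map w P) :=
    (indepFun_iff_map_prod_eq_prod_map_map hSm.aemeasurable hwm.aemeasurable).mp hSw
  have E2 : ∫ ω, Real.cos (S ω + 2 * w ω) ∂P = 0 := by
    have hmc : Measurable fun p : ℝ × ℝ => Real.cos (p.1 + 2 * p.2) := by fun_prop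
    rw [← integral_map (hSm.prodMk hwm).aemeasurable hmc.aestronglyMeasurable, hmap]
    haveI : IsProbabilityMeasure (Measure.map S P) :=
      Measure.isProbabilityMeasure_map hSm.aemeasurable
    haveI : IsProbabilityMeasure (Measure.map w P) :=
      Measure.isProbabilityMeasure_map hwm.aemeasurable
    have hint : Integrable (fun p : ℝ × ℝ => Real.cos (p.1 + 2 * p.2))
        ((Measure.map S P).prod (Measure.map w P)) :=
      (integrable_const 1).mono' hmc.aestronglyMeasurable
        (ae_of_all _ fun p => by simpa using Real.abs_cos_le_one _)
    rw [integral_prod _ hint]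
    simp_rw [hw, integral_cos_unif, integral_zero]
  calc ∫ ω, (Real.sqrt 2 * Real.cos (g * x ω + w ω))
        * (Real.sqrt 2 * Real.cos (g * y ω + w ω)) ∂P
      = ∫ ω, (Real.cos (g * x ω + (-g) * y ω)
          + Real.cos ((g * x ω + g * y ω) + 2 * w ω)) ∂P := by
        exact integral_congr_ae (ae_of_all _ hpt)
    _ = (∫ ω, Real.cos (g * x ω + (-g) * y ω) ∂P)
          + ∫ ω, Real.cos ((g * x ω + g * y ω) + 2 * w ω) ∂P := integral_add int1 int2
    _ = Real.exp (-(γ * (1 - ρ))) := by rw [E1, E2, add_zero]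
end

section
/- For all γ > 0 and ρ < 1 (so that 0 < e^{−γ(1−ρ)} < 1), the asymptotic variance of the normalized RFF estimator is strictly smaller than that of the unnormalized one: V_{n,ρ,γ} < V_{ρ,γ}. Equivalently, (1/4)·e^{−2γ(1−ρ)}·[3 − e^{−4γ(1−ρ)}] > 0, i.e. for every t ∈ (0,1), (1/4)·t²·(3 − t⁴) > 0, with t = e^{−γ(1−ρ)}. -/
open Real

lemma nrff_aux (γ ρ : ℝ) (hγ : 0 < γ) (hρ : ρ < 1) :
    1/4 * exp (-(2*γ*(1-ρ))) * (3 - exp (-(4*γ*(1-ρ)))) > 0 := by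
  have h : -(4*γ*(1-ρ)) < 0 := by nlinarith
  have h3 : exp (-(4*γ*(1-ρ))) < 1 := exp_lt_one_iff.mpr h
  have h2 : 0 < exp (-(2*γ*(1-ρ))) := exp_pos _
  nlinarith

/-- For all `γ > 0` and `ρ < 1`, the asymptotic variance of the normalized
RFF estimator, `V_{n,ρ,γ} = V_{ρ,γ} - (1/4)·e^{-2γ(1-ρ)}·[3 - e^{-4γ(1-ρ)}]`, is strictly
smaller than the unnormalized one `V_{ρ,γ} = 1/2 + (1/2)(1 - e^{-2γ(1-ρ)})²`; equivalently,
for every `t ∈ (0,1)`, `(1/4)·t²·(3 - t⁴) > 0` (with `t = e^{-γ(1-ρ)}`). -/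
theorem nrff_variance_smaller :
    (∀ γ ρ : ℝ, 0 < γ → ρ < 1 →
      (1/2 + 1/2 * (1 - exp (-(2*γ*(1-ρ))))^2)
          - 1/4 * exp (-(2*γ*(1-ρ))) * (3 - exp (-(4*γ*(1-ρ))))
        < 1/2 + 1/2 * (1 - exp (-(2*γ*(1-ρ))))^2) ∧
    (∀ γ ρ : ℝ, 0 < γ → ρ < 1 →
      1/4 * exp (-(2*γ*(1-ρ))) * (3 - exp (-(4*γ*(1-ρ)))) > 0) ∧
    (∀ t : ℝ, 0 < t → t < 1 → 1/4 * t^2 * (3 - t^4) > 0) := by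
  refine ⟨fun γ ρ hγ hρ => by linarith [nrff_aux γ ρ hγ hρ],
    fun γ ρ hγ hρ => nrff_aux γ ρ hγ hρ,
    fun t ht h1 => by nlinarith [pow_lt_one₀ ht.le h1 (by norm_num : (4:ℕ) ≠ 0), pow_pos ht 2]⟩
end
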